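/- Let s ∈ [1,∞), and let (u_n) be a sequence in L^s(ℝ^N) such that for every r > 0, ∫_{B_r} |u_n|^s dx → ∫_{B_r} |u|^s dx as n → ∞, for some u ∈ L^s(ℝ^N). Then there exists a subsequence (u_{n_j}) such that for every σ > 0 there is r_σ > 0 with limsup_{j→∞} ∫_{B_j ∖ B_r} |u_{n_j}|^s dx ≤ σ for all r ≥ r_σ. -/

import Mathlib

open MeasureTheory Filter Metric Topology

/-!
Pass to a diagonal subsequence along which `∫_{B_j} |u_{n_j}|^s - ∫_{B_j} |u|^s → 0`. For `j ≥ r`,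
`∫_{B_j ∖ B_r} |u_{n_j}|^s = ∫_{B_j} |u_{n_j}|^s - ∫_{B_r} |u_{n_j}|^s`, and as `j → ∞` the first
term is at most `∫ |u|^s + o(1)` while the second tends to `∫_{B_r} |u|^s`. Hence the limsup is at
most the tail `∫_{ℝ^N ∖ B_r} |u|^s`, which is below `σ` once `r` is large.
-/

lemma exists_strictMono_tendsto_sub_diagonal {a : ℕ → ℕ → ℝ} {b : ℕ → ℝ}
    (h : ∀ j, Tendsto (fun k => a k j) atTop (𝓝 (b j))) :
    ∃ φ : ℕ → ℕ, StrictMono φ ∧ Tendsto (fun j => a (φ j) j - b j) atTop (𝓝 0) := by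
  have hclose : ∀ j, ∀ᶠ k in atTop, dist (a k j) (b j) < 1 / ((j : ℝ) + 1) := fun j =>
    (h j).eventually (ball_mem_nhds _ Nat.one_div_pos_of_nat)
  obtain ⟨φ, hφ, hφclose⟩ := extraction_forall_of_eventually hclose
  exact ⟨φ, hφ, squeeze_zero_norm (fun j => (hφclose j).le) tendsto_one_div_add_atTop_nhds_zero_nat⟩

lemma MeasureTheory.MemLp.integrable_abs_rpow_ofReal {α : Type*} [MeasurableSpace α] {μ : Measure α}
    {f : α → ℝ} {p : ℝ} (hp : 0 < p) (hf : MemLp f (ENNReal.ofReal p) μ) :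
    Integrable (fun x => |f x| ^ p) μ := by
  simpa [ENNReal.toReal_ofReal hp.le, Real.norm_eq_abs] using
    hf.integrable_norm_rpow (by simpa using hp) ENNReal.ofReal_ne_top

section Balls

variable {X : Type*} [PseudoMetricSpace X] [MeasurableSpace X] [OpensMeasurableSpace X]
  {μ : Measure X} (x₀ : X)

lemma tendsto_setIntegral_ball_atTop {f : X → ℝ} (hf : Integrable f μ) :
    Tendsto (fun r : ℝ => ∫ x in ball x₀ r, f x ∂μ) atTop (𝓝 (∫ x, f x ∂μ)) := by
  have hcover : ⋃ r : ℝ, ball x₀ r = Set.univ :=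
    Set.iUnion_eq_univ_iff.2 fun y => ⟨dist y x₀ + 1, mem_ball.2 (lt_add_one _)⟩
  have h := tendsto_setIntegral_of_monotone (μ := μ) (f := f) (fun r => measurableSet_ball)
    (fun _ _ hrr' => ball_subset_ball hrr') (by rw [hcover]; exact hf.integrableOn)
  rwa [hcover, setIntegral_univ] at h

lemma limsup_setIntegral_annulus_le {g : ℕ → X → ℝ} {f : X → ℝ}
    (hg : ∀ j, Integrable (g j) μ) (hg0 : ∀ j, 0 ≤ g j) (hf : Integrable f μ) (hf0 : 0 ≤ f)
    (hdiag : Tendsto (fun j : ℕ => ∫ x in ball x₀ j, g j x ∂μ - ∫ x in ball x₀ j, f x ∂μ)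
      atTop (𝓝 0))
    {r : ℝ} (hr : Tendsto (fun j => ∫ x in ball x₀ r, g j x ∂μ) atTop
      (𝓝 (∫ x in ball x₀ r, f x ∂μ))) :
    limsup (fun j : ℕ => ∫ x in ball x₀ j \ ball x₀ r, g j x ∂μ) atTop ≤
      ∫ x, f x ∂μ - ∫ x in ball x₀ r, f x ∂μ := by
  set bound := fun j : ℕ => (∫ x in ball x₀ j, g j x ∂μ - ∫ x in ball x₀ j, f x ∂μ) +
    ∫ x, f x ∂μ - ∫ x in ball x₀ r, g j x ∂μ
  have hle : ∀ᶠ j : ℕ in atTop, ∫ x in ball x₀ j \ ball x₀ r, g j x ∂μ ≤ bound j := by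
    filter_upwards [eventually_ge_atTop ⌈r⌉₊] with j hj
    have hrj : r ≤ j := (Nat.le_ceil r).trans (by exact_mod_cast hj)
    rw [setIntegral_sdiff measurableSet_ball (hg j).integrableOn (ball_subset_ball hrj)]
    linarith [setIntegral_le_integral (s := ball x₀ j) hf (Eventually.of_forall hf0)]
  have hbound : Tendsto bound atTop (𝓝 (0 + ∫ x, f x ∂μ - ∫ x in ball x₀ r, f x ∂μ)) :=
    (hdiag.add_const _).sub hr
  calc limsup (fun j : ℕ => ∫ x in ball x₀ j \ ball x₀ r, g j x ∂μ) atTop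
      ≤ limsup bound atTop :=
        limsup_le_limsup hle
          (isCoboundedUnder_le_of_le atTop fun j => integral_nonneg (hg0 j))
          hbound.isBoundedUnder_le
    _ = ∫ x, f x ∂μ - ∫ x in ball x₀ r, f x ∂μ := by rw [hbound.limsup_eq, zero_add]

theorem exists_strictMono_limsup_setIntegral_annulus_le {g : ℕ → X → ℝ} {f : X → ℝ}
    (hg : ∀ n, Integrable (g n) μ) (hg0 : ∀ n, 0 ≤ g n) (hf : Integrable f μ) (hf0 : 0 ≤ f)
    (hconv : ∀ r : ℝ, 0 < r → Tendsto (fun n => ∫ x in ball x₀ r, g n x ∂μ) atTop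
      (𝓝 (∫ x in ball x₀ r, f x ∂μ))) :
    ∃ φ : ℕ → ℕ, StrictMono φ ∧ ∀ σ : ℝ, 0 < σ → ∃ rσ : ℝ, 0 < rσ ∧ ∀ r : ℝ, rσ ≤ r →
      limsup (fun j : ℕ => ∫ x in ball x₀ j \ ball x₀ r, g (φ j) x ∂μ) atTop ≤ σ := by
  have hconv₀ : ∀ r : ℝ, 0 ≤ r → Tendsto (fun n => ∫ x in ball x₀ r, g n x ∂μ) atTop
      (𝓝 (∫ x in ball x₀ r, f x ∂μ)) := by
    intro r hr
    rcases hr.eq_or_lt with rfl | hr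
    · simp
    · exact hconv r hr
  obtain ⟨φ, hφ, hdiag⟩ := exists_strictMono_tendsto_sub_diagonal
    (a := fun n (j : ℕ) => ∫ x in ball x₀ j, g n x ∂μ) fun j => hconv₀ j j.cast_nonneg
  refine ⟨φ, hφ, fun σ hσ => ?_⟩
  obtain ⟨rσ, hrσ⟩ := (((tendsto_setIntegral_ball_atTop x₀ hf).eventually
    (eventually_gt_nhds (sub_lt_self _ hσ))).and (eventually_ge_atTop 1)).exists_forall_of_atTop
  refine ⟨rσ, one_pos.trans_le (hrσ rσ le_rfl).2, fun r hr => ?_⟩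
  have hr0 : 0 < r := one_pos.trans_le (hrσ r hr).2
  calc _ ≤ ∫ x, f x ∂μ - ∫ x in ball x₀ r, f x ∂μ :=
        limsup_setIntegral_annulus_le x₀ (fun j => hg (φ j)) (fun j => hg0 (φ j)) hf hf0 hdiag
          ((hconv r hr0).comp hφ.tendsto_atTop)
    _ ≤ σ := by linarith [(hrσ r hr).1]

end Balls

/-- Vanishing lemma: if `∫_{B_r}|u_n|^s → ∫_{B_r}|u|^s` for every `r > 0`, then some
subsequence `(u_{n_j})` satisfies: for every `σ > 0` there is `r_σ > 0` with
`limsup_j ∫_{B_j ∖ B_r}|u_{n_j}|^s ≤ σ` for all `r ≥ r_σ`. -/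
theorem vanishing_subsequence (N : ℕ) (s : ℝ) (hs : 1 ≤ s)
    (u : EuclideanSpace ℝ (Fin N) → ℝ) (un : ℕ → EuclideanSpace ℝ (Fin N) → ℝ)
    (hu : MemLp u (ENNReal.ofReal s) (volume : Measure (EuclideanSpace ℝ (Fin N))))
    (hun : ∀ n, MemLp (un n) (ENNReal.ofReal s)
      (volume : Measure (EuclideanSpace ℝ (Fin N))))
    (hconv : ∀ r : ℝ, 0 < r →
      Tendsto (fun n => ∫ x in Metric.ball (0 : EuclideanSpace ℝ (Fin N)) r, |un n x| ^ s)
        atTop (nhds (∫ x in Metric.ball (0 : EuclideanSpace ℝ (Fin N)) r, |u x| ^ s))) :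
    ∃ n : ℕ → ℕ, StrictMono n ∧ ∀ σ : ℝ, 0 < σ → ∃ rσ : ℝ, 0 < rσ ∧
      ∀ r : ℝ, rσ ≤ r →
        Filter.limsup (fun j : ℕ =>
            ∫ x in Metric.ball (0 : EuclideanSpace ℝ (Fin N)) (j : ℝ) \
                Metric.ball (0 : EuclideanSpace ℝ (Fin N)) r, |un (n j) x| ^ s)
          atTop ≤ σ := by
  have hs0 : 0 < s := one_pos.trans_le hs
  exact exists_strictMono_limsup_setIntegral_annulus_le (0 : EuclideanSpace ℝ (Fin N))
    (g := fun n x => |un n x| ^ s) (f := fun x => |u x| ^ s)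
    (fun n => (hun n).integrable_abs_rpow_ofReal hs0)
    (fun n x => Real.rpow_nonneg (abs_nonneg _) s) (hu.integrable_abs_rpow_ofReal hs0)
    (fun x => Real.rpow_nonneg (abs_nonneg _) s) hconv
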